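/- Let K be a field of characteristic 0 and A = ⊕_{i∈ℤ} K·e_i the algebra with e_i ∘ e_j = (i+1)·e_{i+j} (the half-Witt algebra W₁^{rsym}). Define the bilinear form ϑ : A × A → K by ϑ(e_i, e_j) = −(j+1)·j if i + j = −1 and ϑ(e_i, e_j) = 0 otherwise. Then: (i) ϑ is a right-symmetric 2-cocycle with trivial coefficients, i.e. −ϑ(a∘b,c) + ϑ(a∘c,b) + ϑ(a,[b,c]) = 0 for all a,b,c ∈ A; and (ii) ϑ is not a coboundary: there is no K-linear map ω : A → K with ϑ(a,b) = −ω(a∘b) for all a,b ∈ A. Hence W₁^{rsym} has a nontrivial right-symmetric central extension. -/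

import Mathlib

/-- The multiplication of the half-Witt algebra `W₁^{rsym}`:
`e_i ∘ e_j = (i+1)·e_{i+j}`. -/
noncomputable def wOneMul {K : Type*} [CommRing K] (f g : ℤ →₀ K) : ℤ →₀ K :=
  f.sum fun i a => g.sum fun j b => Finsupp.single (i + j) (((i + 1 : ℤ) : K) * a * b)

/-- The bilinear form `ϑ(e_i,e_j) = −(j+1)·j` if `i+j = −1`, and `0` otherwise. -/
noncomputable def wOneCocycle {K : Type*} [CommRing K] (f g : ℤ →₀ K) : K :=
  f.sum fun i a => g.sum fun j b =>
    a * b * (if i + j = -1 then ((-(j + 1) * j : ℤ) : K) else 0)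

/-- Over a field of characteristic 0, the form `ϑ(e_i,e_j) = −(j+1)j δ_{i+j,−1}`
is a right-symmetric 2-cocycle of `W₁^{rsym}` with trivial coefficients which is
not a coboundary; hence `W₁^{rsym}` has a nontrivial right-symmetric central
extension. -/
noncomputable def mulB {K : Type*} [CommRing K] : (ℤ →₀ K) →ₗ[K] (ℤ →₀ K) →ₗ[K] (ℤ →₀ K) :=
  Finsupp.lsum K fun i => LinearMap.toSpanSingleton K _
    (Finsupp.lsum K fun j => LinearMap.toSpanSingleton K _
      (Finsupp.single (i + j) ((i + 1 : ℤ) : K)))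

noncomputable def cocB {K : Type*} [CommRing K] : (ℤ →₀ K) →ₗ[K] (ℤ →₀ K) →ₗ[K] K :=
  Finsupp.lsum K fun i => LinearMap.toSpanSingleton K _
    (Finsupp.lsum K fun j => LinearMap.toSpanSingleton K K
      (if i + j = -1 then ((-(j + 1) * j : ℤ) : K) else 0))

lemma mulB_eq {K : Type*} [CommRing K] (f g : ℤ →₀ K) : mulB f g = wOneMul f g := by
  unfold mulB wOneMul
  rw [Finsupp.lsum_apply]
  simp only [Finsupp.sum, LinearMap.sum_apply]
  refine Finset.sum_congr rfl fun i _ => ?_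
  rw [LinearMap.toSpanSingleton_apply, LinearMap.smul_apply, Finsupp.lsum_apply,
    Finsupp.smul_sum]
  simp only [Finsupp.sum]
  refine Finset.sum_congr rfl fun j _ => ?_
  rw [LinearMap.toSpanSingleton_apply, Finsupp.smul_single, Finsupp.smul_single,
    smul_eq_mul, smul_eq_mul]
  ring_nf

lemma cocB_eq {K : Type*} [CommRing K] (f g : ℤ →₀ K) : cocB f g = wOneCocycle f g := by
  unfold cocB wOneCocycle
  rw [Finsupp.lsum_apply]
  simp only [Finsupp.sum, LinearMap.sum_apply]
  refine Finset.sum_congr rfl fun i _ => ?_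
  rw [LinearMap.toSpanSingleton_apply, LinearMap.smul_apply, Finsupp.lsum_apply,
    smul_eq_mul, Finsupp.mul_sum]
  simp only [Finsupp.sum]
  refine Finset.sum_congr rfl fun j _ => ?_
  rw [LinearMap.toSpanSingleton_apply, smul_eq_mul]
  ring

lemma mulB_single {K : Type*} [CommRing K] (i j : ℤ) (a b : K) :
    mulB (Finsupp.single i a) (Finsupp.single j b)
      = Finsupp.single (i + j) (a * (b * ((i + 1 : ℤ) : K))) := by
  unfold mulB
  rw [Finsupp.lsum_single, LinearMap.toSpanSingleton_apply, LinearMap.smul_apply,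
    Finsupp.lsum_single, LinearMap.toSpanSingleton_apply, Finsupp.smul_single,
    Finsupp.smul_single, smul_eq_mul, smul_eq_mul]

lemma cocB_single {K : Type*} [CommRing K] (i j : ℤ) (a b : K) :
    cocB (Finsupp.single i a) (Finsupp.single j b)
      = a * (b * (if i + j = -1 then ((-(j + 1) * j : ℤ) : K) else 0)) := by
  unfold cocB
  rw [Finsupp.lsum_single, LinearMap.toSpanSingleton_apply, LinearMap.smul_apply,
    Finsupp.lsum_single, LinearMap.toSpanSingleton_apply, smul_eq_mul, smul_eq_mul]

lemma key_cocycle {K : Type*} [Field K] (a b c : ℤ →₀ K) :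
    -cocB (mulB a b) c + cocB (mulB a c) b
      + cocB a (mulB b c - mulB c b) = 0 := by
  induction a using Finsupp.induction_linear with
  | zero => simp
  | add f g hf hg =>
      simp only [map_add, LinearMap.add_apply] at hf hg ⊢
      linear_combination hf + hg
  | single i x =>
    induction b using Finsupp.induction_linear with
    | zero => simp
    | add f g hf hg =>
        simp only [map_add, map_sub, LinearMap.add_apply, LinearMap.sub_apply] at hf hg ⊢
        linear_combination hf + hg
    | single j y =>
      induction c using Finsupp.induction_linear with
      | zero => simp
      | add f g hf hg =>
          simp only [map_add, map_sub, LinearMap.add_apply, LinearMap.sub_apply] at hf hg ⊢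
          linear_combination hf + hg
      | single k z =>
          simp only [mulB_single, map_sub, LinearMap.sub_apply, cocB_single]
          split_ifs with h1 h2 h3 h4 <;>
            first
              | omega
              | (push_cast; ring1)
              | ((obtain rfl : i = -1 - j - k := by omega); push_cast; ring1)

theorem wOne_central_extension {K : Type*} [Field K] [CharZero K] :
    (∀ a b c : ℤ →₀ K,
      -wOneCocycle (wOneMul a b) c + wOneCocycle (wOneMul a c) b
        + wOneCocycle a (wOneMul b c - wOneMul c b) = 0) ∧
    ¬ ∃ ω : (ℤ →₀ K) →ₗ[K] K,
        ∀ a b : ℤ →₀ K, wOneCocycle a b = -ω (wOneMul a b) := by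
  constructor
  · intro a b c
    have := key_cocycle a b c
    rw [mulB_eq, mulB_eq, mulB_eq, mulB_eq] at this
    rw [cocB_eq, cocB_eq, cocB_eq] at this
    exact this
  · rintro ⟨ω, hω⟩
    have hm0 : mulB (Finsupp.single (0:ℤ) (1:K)) (Finsupp.single (-1:ℤ) (1:K))
        = Finsupp.single (-1:ℤ) (1:K) := by rw [mulB_single]; norm_num
    have hc0 : cocB (Finsupp.single (0:ℤ) (1:K)) (Finsupp.single (-1:ℤ) (1:K)) = 0 := by
      rw [cocB_single]; norm_num
    have hm1 : mulB (Finsupp.single (1:ℤ) (1:K)) (Finsupp.single (-2:ℤ) (1:K))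
        = Finsupp.single (-1:ℤ) (2:K) := by
      rw [mulB_single]
      norm_num
    have hc1 : cocB (Finsupp.single (1:ℤ) (1:K)) (Finsupp.single (-2:ℤ) (1:K)) = (-2 : K) := by
      rw [cocB_single]; norm_num
    have h0 := hω (Finsupp.single (0:ℤ) (1:K)) (Finsupp.single (-1:ℤ) (1:K))
    have h1 := hω (Finsupp.single (1:ℤ) (1:K)) (Finsupp.single (-2:ℤ) (1:K))
    rw [← cocB_eq, ← mulB_eq, hc0, hm0] at h0
    rw [← cocB_eq, ← mulB_eq, hc1, hm1] at h1
    have hω0 : ω (Finsupp.single (-1:ℤ) (1:K)) = 0 := by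
      rw [eq_comm, neg_eq_zero] at h0; exact h0
    have e2 : (Finsupp.single (-1 : ℤ) (2 : K))
        = (2 : K) • Finsupp.single (-1 : ℤ) (1 : K) := by
      rw [Finsupp.smul_single, smul_eq_mul, mul_one]
    rw [e2, map_smul, smul_eq_mul, hω0, mul_zero, neg_zero] at h1
    norm_num at h1
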